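/- Spearman's footrule distance and Kendall distance satisfy d_K(π,ν) ≤ d_S(π,ν) ≤ 2·d_K(π,ν), where d_S(π,ν) = Σ_i |π(i) - ν(i)| and d_K is the number of discordant pairs. -/

import Mathlib

/-!
For `u` fixed, `π u` elements lie below `u` in `π` and only `ν u` of them can lie below `u`
in `ν`, so at least `π u - ν u` elements form a discordant pair with `u`; symmetrically for
`ν u - π u`. Summing over `u` counts every discordant pair twice, so `d_S ≤ 2 d_K`.

Conversely, orient each discordant pair as `ν u < ν v`, `π v < π u`. Either `ν v ≤ π u`, and
`v` is one of the `π u - ν u` elements with `ν v ∈ (ν u, π u]`, or `π u < ν v`, and `u` is one of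
the `ν v - π v` elements with `π u ∈ (π v, ν v]`. Since `(a - b)⁺ + (b - a)⁺ = |a - b|`, summing
gives `d_K ≤ d_S`.
-/

open Finset

/-- The Kendall distance between permutations: the number of discordant pairs. -/
def kendallDist {n : ℕ} (π ν : Equiv.Perm (Fin n)) : ℕ :=
  (Finset.univ.filter (fun p : Fin n × Fin n => p.1 < p.2 ∧
    (((π p.1 : ℕ) : ℤ) - ((π p.2 : ℕ) : ℤ)) * (((ν p.1 : ℕ) : ℤ) - ((ν p.2 : ℕ) : ℤ)) < 0)).card

variable {α β : Type*}

section Counting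

variable [Fintype α]

theorem card_filter_prod_eq_sum_card_filter (r : α → α → Prop) [DecidableRel r] :
    #{p : α × α | r p.1 p.2} = ∑ a, #{b | r a b} := by
  simp only [card_filter, Fintype.sum_prod_type]

theorem card_filter_equiv_mem [Fintype β] [DecidableEq β] (e : α ≃ β) (s : Finset β) :
    #{a | e a ∈ s} = #s := by
  apply card_nbij' e e.symm <;> simp [Set.MapsTo, Set.LeftInvOn, Set.RightInvOn]

theorem two_mul_card_filter_lt_and [LinearOrder β] {f : α → β} (hf : Function.Injective f)
    {r : α → α → Prop} [DecidableRel r] (hsymm : ∀ a b, r a b → r b a) (hirr : ∀ a, ¬ r a a) :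
    2 * #{p : α × α | f p.1 < f p.2 ∧ r p.1 p.2} = #{p : α × α | r p.1 p.2} := by
  have hswap : #{p : α × α | f p.2 < f p.1 ∧ r p.1 p.2} =
      #{p : α × α | f p.1 < f p.2 ∧ r p.1 p.2} := by
    apply card_nbij' Prod.swap Prod.swap <;>
      simp +contextual [Set.MapsTo, Set.LeftInvOn, Set.RightInvOn, hsymm]
  have hsplit : #{p : α × α | r p.1 p.2} = #{p : α × α | f p.1 < f p.2 ∧ r p.1 p.2} +
      #{p : α × α | f p.2 < f p.1 ∧ r p.1 p.2} := by
    rw [← card_filter_add_card_filter_not (fun p : α × α => f p.1 < f p.2), filter_filter,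
      filter_filter]
    congr 2
    · exact filter_congr fun _ _ => and_comm
    · refine filter_congr fun p _ => ⟨fun ⟨hr, hlt⟩ => ⟨?_, hr⟩, fun ⟨hlt, hr⟩ => ⟨hr, hlt.not_gt⟩⟩
      refine (not_lt.mp hlt).lt_of_ne fun h => hirr p.1 ?_
      rwa [hf h] at hr
  omega

variable {n : ℕ}

theorem card_filter_apply_lt (e : α ≃ Fin n) (u : α) : #{v | e v < e u} = e u := by
  rw [← Fin.card_Iio, ← card_filter_equiv_mem e]
  simp only [mem_Iio]

theorem card_filter_lt_apply_le (e : α ≃ Fin n) (f : α → Fin n) (u : α) :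
    #{v | e u < e v ∧ e v ≤ f u} = f u - e u := by
  rw [← Fin.card_Ioc, ← card_filter_equiv_mem e]
  simp only [mem_Ioc]

end Counting

def Discordant [LinearOrder β] (π ν : α → β) (u v : α) : Prop :=
  π u < π v ∧ ν v < ν u ∨ π v < π u ∧ ν u < ν v

instance [LinearOrder β] (π ν : α → β) : DecidableRel (Discordant π ν) :=
  fun _ _ => inferInstanceAs (Decidable (_ ∨ _))

namespace Discordant

variable [LinearOrder β] {π ν : α → β} {u v : α}

theorem symm (h : Discordant π ν u v) : Discordant π ν v u := Or.symm h

theorem irrefl (u : α) : ¬ Discordant π ν u u := by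
  simp [Discordant]

theorem _root_.discordant_comm : Discordant π ν u v ↔ Discordant ν π u v := by
  unfold Discordant
  tauto

end Discordant

def footrule {n : ℕ} [Fintype α] (π ν : α → Fin n) : ℤ :=
  ∑ i, |((π i : ℕ) : ℤ) - ((ν i : ℕ) : ℤ)|

section Footrule

variable [Fintype α] {n : ℕ}

theorem sub_le_card_discordant (π ν : α ≃ Fin n) (u : α) :
    (π u : ℕ) - ν u ≤ #{v | Discordant π ν u v} := by
  classical
  calc (π u : ℕ) - ν u = #{v | π v < π u} - #{v | ν v < ν u} := by
        rw [card_filter_apply_lt, card_filter_apply_lt]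
    _ ≤ #(({v | π v < π u} : Finset α) \ ({v | ν v < ν u} : Finset α)) := le_card_sdiff _ _
    _ ≤ #{v | Discordant π ν u v} := card_le_card fun v hv => by
      simp only [mem_sdiff, mem_filter, mem_univ, true_and, not_lt] at hv ⊢
      refine Or.inr ⟨hv.1, hv.2.lt_of_ne fun h => hv.1.ne ?_⟩
      rw [ν.injective h]

theorem abs_sub_le_card_discordant (π ν : α ≃ Fin n) (u : α) :
    |((π u : ℕ) : ℤ) - ((ν u : ℕ) : ℤ)| ≤ #{v | Discordant π ν u v} := by
  have h₁ := sub_le_card_discordant π ν u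
  have h₂ := sub_le_card_discordant ν π u
  simp only [← discordant_comm (π := π)] at h₂
  rw [abs_sub_le_iff]
  omega

theorem footrule_le_card_discordant (π ν : α ≃ Fin n) :
    footrule π ν ≤ #{p : α × α | Discordant π ν p.1 p.2} := by
  rw [card_filter_prod_eq_sum_card_filter, Nat.cast_sum]
  exact sum_le_sum fun u _ => abs_sub_le_card_discordant π ν u

theorem card_filter_lt_discordant_le_footrule (π ν : α ≃ Fin n) :
    (#{p : α × α | ν p.1 < ν p.2 ∧ Discordant π ν p.1 p.2} : ℤ) ≤ footrule π ν := by
  classical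
  have hA : #{p : α × α | ν p.1 < ν p.2 ∧ ν p.2 ≤ π p.1} = ∑ u, ((π u : ℕ) - ν u) := by
    rw [card_filter_prod_eq_sum_card_filter fun a b => ν a < ν b ∧ ν b ≤ π a]
    exact sum_congr rfl fun u _ => card_filter_lt_apply_le ν π u
  have hB : #{p : α × α | π p.2 < π p.1 ∧ π p.1 ≤ ν p.2} = ∑ u, ((ν u : ℕ) - π u) := by
    simp only [card_filter, Fintype.sum_prod_type_right, ← card_filter_lt_apply_le π ν]
  have hcover : #{p : α × α | ν p.1 < ν p.2 ∧ Discordant π ν p.1 p.2} ≤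
      #(({p : α × α | ν p.1 < ν p.2 ∧ ν p.2 ≤ π p.1} : Finset (α × α)) ∪
        ({p : α × α | π p.2 < π p.1 ∧ π p.1 ≤ ν p.2} : Finset (α × α))) :=
    card_le_card fun p hp => by
      have := (mem_filter.mp hp).2
      simp only [Discordant, mem_filter_univ, mem_union] at this ⊢
      omega
  have hsum : ∑ u, (((π u : ℕ) - ν u : ℕ) : ℤ) + ∑ u, (((ν u : ℕ) - π u : ℕ) : ℤ) =
      footrule π ν := by
    rw [footrule, ← sum_add_distrib]
    exact sum_congr rfl fun u _ => by rw [abs_eq_max_neg]; omega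
  calc (#{p : α × α | ν p.1 < ν p.2 ∧ Discordant π ν p.1 p.2} : ℤ)
      ≤ #{p : α × α | ν p.1 < ν p.2 ∧ ν p.2 ≤ π p.1} +
          #{p : α × α | π p.2 < π p.1 ∧ π p.1 ≤ ν p.2} := by
        exact_mod_cast hcover.trans (card_union_le _ _)
    _ = footrule π ν := by rw [hA, hB, Nat.cast_sum, Nat.cast_sum, hsum]

end Footrule

variable {n : ℕ}

theorem kendallDist_eq_card_filter_lt_discordant (π ν : Equiv.Perm (Fin n)) :
    kendallDist π ν = #{p : Fin n × Fin n | p.1 < p.2 ∧ Discordant π ν p.1 p.2} := by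
  refine congrArg card (filter_congr fun p _ => and_congr_right fun _ => ?_)
  simp only [Discordant, mul_neg_iff, Fin.lt_def]
  omega

theorem two_mul_kendallDist (π ν : Equiv.Perm (Fin n)) :
    2 * kendallDist π ν = #{p : Fin n × Fin n | Discordant π ν p.1 p.2} := by
  rw [kendallDist_eq_card_filter_lt_discordant]
  exact two_mul_card_filter_lt_and (f := id) Function.injective_id (fun _ _ => Discordant.symm)
    Discordant.irrefl

theorem kendallDist_eq_card_filter_apply_lt_discordant [LinearOrder β]
    (π ν : Equiv.Perm (Fin n)) {f : Fin n → β} (hf : Function.Injective f) :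
    kendallDist π ν = #{p : Fin n × Fin n | f p.1 < f p.2 ∧ Discordant π ν p.1 p.2} := by
  have h := two_mul_card_filter_lt_and hf (r := Discordant π ν) (fun _ _ => Discordant.symm)
    Discordant.irrefl
  rw [← two_mul_kendallDist] at h
  omega

/-- Diaconis–Graham inequality: `d_K(π,ν) ≤ d_S(π,ν) ≤ 2·d_K(π,ν)`, where
`d_S(π,ν) = Σ_i |π(i) - ν(i)|` is Spearman's footrule distance. -/
theorem diaconis_graham_inequality {n : ℕ} (π ν : Equiv.Perm (Fin n)) :
    (kendallDist π ν : ℤ) ≤ (∑ i : Fin n, |((π i : ℕ) : ℤ) - ((ν i : ℕ) : ℤ)|) ∧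
    (∑ i : Fin n, |((π i : ℕ) : ℤ) - ((ν i : ℕ) : ℤ)|) ≤ 2 * (kendallDist π ν : ℤ) := by
  refine ⟨?_, ?_⟩
  · rw [kendallDist_eq_card_filter_apply_lt_discordant π ν ν.injective]
    exact card_filter_lt_discordant_le_footrule π ν
  · calc footrule π ν ≤ #{p : Fin n × Fin n | Discordant π ν p.1 p.2} :=
          footrule_le_card_discordant π ν
      _ = 2 * (kendallDist π ν : ℤ) := by exact_mod_cast (two_mul_kendallDist π ν).symm
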